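/- Let G be the full isoradial graph with angle bounds 0 < k ≤ θ_e ≤ K < π and maximal degree Δ < ∞, and let T be the critical Kac-Ward operator on ℓ². For a finite subgraph H, let φ_H = S 1_H where 1_H is the indicator of H. Then ‖Tφ_H‖ ≤ C·√(|H₀|/|H|)·‖φ_H‖, where H₀ is the set of undirected edges pointing at non-interior vertices of H or of G∖H, and C = tan(K/2)·Δ/sin(k/2). Consequently, if G admits finite subgraphs with |H₀|/|H| → 0, then T has no bounded inverse on ℓ². -/

import Mathlib

open Complex

noncomputable section

attribute [local instance] Classical.propDecidable

/-- Reversal of a directed edge. -/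
def rev (e : ℂ × ℂ) : ℂ × ℂ := (e.2, e.1)

/-- The undirected edge underlying a directed edge. -/
def ue (e : ℂ × ℂ) : Sym2 ℂ := s(e.1, e.2)

/-- The turning angle `∠(e, g) ∈ (-π, π]`. -/
def ang (e g : ℂ × ℂ) : ℝ := Complex.arg ((g.2 - g.1) / (e.2 - e.1))

/-- The counterclockwise angle from `e` to `g`, in `(0, 2π]`. -/
def ccw (e g : ℂ × ℂ) : ℝ := if 0 < ang e g then ang e g else ang e g + 2 * Real.pi

/-- `e₁` and `e₂` are consecutive (in counterclockwise order) directed edges of `D`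
pointing at the vertex `z`: no other edge of `D` pointing at `z` lies strictly between
them counterclockwise. -/
def ConsecIn (D : Set (ℂ × ℂ)) (z : ℂ) (e₁ e₂ : ℂ × ℂ) : Prop :=
  e₁ ∈ D ∧ e₂ ∈ D ∧ e₁.2 = z ∧ e₂.2 = z ∧ e₁ ≠ e₂ ∧
  ∀ g ∈ D, g.2 = z → g ≠ e₁ → g ≠ e₂ → ccw (rev e₁) (rev e₂) ≤ ccw (rev e₁) (rev g)

/-- An isoradial graph, presented by its symmetric set of directed edges together with
the rhombus half-angles `θ_e ∈ (0, π)` of its edges.  The fields `angleSum`,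
`consecAngle` and `angAdd` record the basic geometric properties of a rhombic (isoradial)
embedding: the angles `θ` sum to `π` around every vertex, the turning angle between
consecutive incoming edges at a vertex is `θ_{e₁} + θ_{e₂}`, and turning angles at a
vertex are additive. -/
structure Isoradial where
  D : Set (ℂ × ℂ)
  θ : Sym2 ℂ → ℝ
  nd : ∀ e ∈ D, e.1 ≠ e.2
  symm : ∀ e ∈ D, rev e ∈ D
  finOut : ∀ z : ℂ, {g ∈ D | g.1 = z}.Finite
  θpos : ∀ e ∈ D, 0 < θ (ue e)
  θlt : ∀ e ∈ D, θ (ue e) < Real.pi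
  angleSum : ∀ z : ℂ, {g ∈ D | g.1 = z}.Nonempty →
    ∑ g ∈ (finOut z).toFinset, θ (ue g) = Real.pi
  consecAngle : ∀ z e₁ e₂, ConsecIn D z e₁ e₂ → ang e₁ e₂ = θ (ue e₁) + θ (ue e₂)
  angAdd : ∀ z e₁ e₂ g, ConsecIn D z e₁ e₂ → g ∈ D → g.1 = z →
    g ≠ rev e₁ → g ≠ rev e₂ → ang e₁ e₂ + ang e₂ g = ang e₁ g

/-- The Kac-Ward operator `T = Id - Λ` acting on functions of directed edges (the
transition sum is taken at directed edges of the graph, and `T` acts as the identity on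
the orthogonal complement, i.e. away from the graph). -/
def KWop (Γ : Isoradial) (x : Sym2 ℂ → ℝ) (φ : (ℂ × ℂ) → ℂ) (e : ℂ × ℂ) : ℂ :=
  φ e - if e ∈ Γ.D then
    ∑ g ∈ (Γ.finOut e.2).toFinset,
      if g ≠ rev e then (x (ue e) : ℂ) * Complex.exp (Complex.I * (ang e g : ℂ) / 2) * φ g
      else 0
  else 0

/-- The critical weight system `x_e = tan(θ_e/2)`. -/
def critX (Γ : Isoradial) : Sym2 ℂ → ℝ := fun t => Real.tan (Γ.θ t / 2)

/-- The unit complex number `exp(-i ∠(e)/2)` spanning the line `ℓ_e`. -/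
def dirL (e : ℂ × ℂ) : ℂ := Complex.exp (-Complex.I * (Complex.arg (e.2 - e.1) : ℂ) / 2)

/-- The line `ℓ_e = exp(-i ∠(e)/2) ℝ ⊆ ℂ`. -/
def lineOf (e : ℂ × ℂ) : Set ℂ := {c : ℂ | ∃ r : ℝ, c = dirL e * (r : ℂ)}

/-- Orthogonal projection of `w` onto the line `u·ℝ`. -/
def projL (u w : ℂ) : ℂ := (((w * (starRingEnd ℂ u)).re / Complex.normSq u : ℝ) : ℂ) * u

/-- The operator `S`: `(Sf)(e) = sin(θ_e/2)·Proj(f(e); ℓ_e)`,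
mapping functions of undirected edges to elements of `L = ∏_e ℓ_e`. -/
def Sproj (Γ : Isoradial) (f : Sym2 ℂ → ℂ) (e : ℂ × ℂ) : ℂ :=
  ((Real.sin (Γ.θ (ue e) / 2) : ℝ) : ℂ) * projL (dirL e) (f (ue e))

/-- A unit vector spanning the line `(z - z*)^{-1/2} ℝ = exp(-iθ_{e₁}/2) ℓ_{e₁}` of the
face shared by a pair of consecutive incoming edges `e₁, e₂` at `z` (here `z*` is the
circumcenter of that face). -/
def faceDir (Γ : Isoradial) (e₁ : ℂ × ℂ) : ℂ :=
  Complex.exp (-Complex.I * (Γ.θ (ue e₁) : ℂ) / 2) * dirL e₁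

/-- `f` is s-holomorphic at `z`: for every face incident to `z` (equivalently, every pair
of consecutive incoming edges `e₁, e₂` at `z`), the projections of `f(e₁)` and `f(e₂)`
onto the line `(z - z*)^{-1/2} ℝ` of the face coincide. -/
def SHolAt (Γ : Isoradial) (f : Sym2 ℂ → ℂ) (z : ℂ) : Prop :=
  ∀ e₁ e₂ : ℂ × ℂ, ConsecIn Γ.D z e₁ e₂ →
    projL (faceDir Γ e₁) (f (ue e₁)) = projL (faceDir Γ e₁) (f (ue e₂))

/-- The squared `ℓ²(directed edges)` norm of a function on directed edges. -/
def l2sq (Γ : Isoradial) (φ : (ℂ × ℂ) → ℂ) : ℝ := ∑' e : Γ.D, Complex.normSq (φ e.1)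

/-- `z` is a non-interior (boundary) vertex for the finite edge set `H`: some edge of the
graph pointing at `z` lies in `H` and some does not. -/
def BdryVtx (Γ : Isoradial) (H : Finset (Sym2 ℂ)) (z : ℂ) : Prop :=
  (∃ e ∈ Γ.D, e.2 = z ∧ ue e ∈ H) ∧ (∃ e ∈ Γ.D, e.2 = z ∧ ue e ∉ H)

/-- `H₀`: the set of undirected edges of the graph pointing at a non-interior vertex of
`H` or of its complement. -/
def bdryEdges (Γ : Isoradial) (H : Finset (Sym2 ℂ)) : Set (Sym2 ℂ) :=
  {t : Sym2 ℂ | ∃ e ∈ Γ.D, ue e = t ∧ (BdryVtx Γ H e.1 ∨ BdryVtx Γ H e.2)}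

/-- The indicator function of a finite set of undirected edges. -/
def indH (H : Finset (Sym2 ℂ)) : Sym2 ℂ → ℂ := fun t => if t ∈ H then 1 else 0

/-!
The map `S` sends the constant function `1` into the kernel of the critical Kac-Ward operator
`T`: listing the edges at a vertex counterclockwise, consecutive incoming edges turn by
`θ_{e₁} + θ_{e₂}` and the angles `θ` add up to `π`, which makes the transition sum telescope.
Since `T` is local, at an edge `e` the vector `T (S 1_H)` agrees with `T (S (1_H - 1_H(e)))`; it
vanishes unless the head of `e` is a boundary vertex, and there each entry has modulus at most
`tan(K/2) · Δ / √2`, whence `‖T φ_H‖² ≤ tan²(K/2) Δ² |H₀|`. The two orientations of an edge carry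
projections onto orthogonal lines, so `‖φ_H‖² ≥ sin²(k/2) |H|`. Subgraphs with `|H₀|/|H| → 0`
thus give approximate kernel vectors of `T`.
-/

@[simp] lemma rev_rev (e : ℂ × ℂ) : rev (rev e) = e := rfl

lemma rev_injective : Function.Injective rev := fun a b h => by
  simpa using congrArg rev h

@[simp] lemma ue_rev (e : ℂ × ℂ) : ue (rev e) = ue e := Sym2.eq_swap

lemma eq_or_eq_rev_of_ue_eq {a b : ℂ × ℂ} (h : ue a = ue b) : a = b ∨ a = rev b := by
  rcases Sym2.eq_iff.mp h with ⟨h1, h2⟩ | ⟨h1, h2⟩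
  · exact Or.inl (Prod.ext h1 h2)
  · exact Or.inr (Prod.ext h1 h2)

lemma rev_sub (e : ℂ × ℂ) : (rev e).2 - (rev e).1 = -(e.2 - e.1) := (neg_sub _ _).symm

lemma ang_rev_rev (x y : ℂ × ℂ) : ang (rev x) (rev y) = ang x y := by
  simp only [ang, rev_sub, neg_div_neg_eq]

lemma ccw_rev_rev (x y : ℂ × ℂ) : ccw (rev x) (rev y) = ccw x y := by
  simp only [ccw, ang_rev_rev]

lemma ang_le_pi (x y : ℂ × ℂ) : ang x y ≤ Real.pi := arg_le_pi _

section Angles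

variable {x y : ℂ × ℂ}

lemma coe_ang (hx : x.2 - x.1 ≠ 0) (hy : y.2 - y.1 ≠ 0) :
    (ang x y : Real.Angle) = arg (y.2 - y.1) - arg (x.2 - x.1) :=
  arg_div_coe_angle hy hx

lemma ang_eq_toReal (hx : x.2 - x.1 ≠ 0) (hy : y.2 - y.1 ≠ 0) :
    ang x y = ((arg (y.2 - y.1) : Real.Angle) - arg (x.2 - x.1)).toReal := by
  rw [← coe_ang hx hy, ang, arg_coe_angle_toReal_eq_arg]

lemma ang_eq_zero_iff (hx : x.2 - x.1 ≠ 0) (hy : y.2 - y.1 ≠ 0) :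
    ang x y = 0 ↔ (arg (x.2 - x.1) : Real.Angle) = arg (y.2 - y.1) := by
  rw [ang_eq_toReal hx hy, Real.Angle.toReal_eq_zero_iff, sub_eq_zero, eq_comm]

lemma ang_rev_eq_pi (hx : x.2 - x.1 ≠ 0) (hy : y.2 - y.1 ≠ 0)
    (h : (arg (x.2 - x.1) : Real.Angle) = arg (y.2 - y.1)) : ang x (rev y) = Real.pi := by
  rw [ang_eq_toReal hx (by rwa [rev_sub, neg_ne_zero]), rev_sub, arg_neg_coe_angle hy, h,
    add_sub_cancel_left, Real.Angle.toReal_pi]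

lemma ang_rev_of_pos (hx : x.2 - x.1 ≠ 0) (hy : y.2 - y.1 ≠ 0) (h : 0 < ang x y) :
    ang x (rev y) = ang x y - Real.pi := by
  have hcoe : (arg (-(y.2 - y.1)) : Real.Angle) - arg (x.2 - x.1)
      = ((ang x y - Real.pi : ℝ) : Real.Angle) := by
    rw [arg_neg_coe_angle hy, Real.Angle.coe_sub, coe_ang hx hy, sub_eq_add_neg (_ - _),
      Real.Angle.neg_coe_pi]
    abel
  rw [ang_eq_toReal hx (by rwa [rev_sub, neg_ne_zero]), rev_sub, hcoe,
    Real.Angle.toReal_coe_eq_self_iff]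
  constructor <;> linarith [ang_le_pi x y]

lemma ccw_mem_Ioc (x y : ℂ × ℂ) : ccw x y ∈ Set.Ioc 0 (0 + 2 * Real.pi) := by
  have h₁ : -Real.pi < ang x y := neg_pi_lt_arg _
  have h₂ := ang_le_pi x y
  unfold ccw
  split_ifs with h <;> constructor <;> linarith

lemma coe_ccw (x y : ℂ × ℂ) : (ccw x y : Real.Angle) = ang x y := by
  unfold ccw
  split_ifs
  · rfl
  · rw [Real.Angle.coe_add, Real.Angle.coe_two_pi, add_zero]

end Angles

def angleFrom (b g : ℂ × ℂ) : ℝ :=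
  toIcoMod Real.two_pi_pos 0 (arg (g.2 - g.1) - arg (b.2 - b.1))

section AngleFrom

variable {b x y : ℂ × ℂ}

lemma angleFrom_mem_Ico (b g : ℂ × ℂ) : angleFrom b g ∈ Set.Ico 0 (0 + 2 * Real.pi) :=
  toIcoMod_mem_Ico _ _ _

lemma angleFrom_nonneg (b g : ℂ × ℂ) : 0 ≤ angleFrom b g := (angleFrom_mem_Ico b g).1

lemma angleFrom_lt_two_pi (b g : ℂ × ℂ) : angleFrom b g < 2 * Real.pi := by
  simpa using (angleFrom_mem_Ico b g).2

@[simp] lemma angleFrom_self (b : ℂ × ℂ) : angleFrom b b = 0 := by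
  simp [angleFrom]

lemma coe_angleFrom (b g : ℂ × ℂ) :
    (angleFrom b g : Real.Angle) = arg (g.2 - g.1) - arg (b.2 - b.1) := by
  rw [angleFrom, Real.Angle.coe_toIcoMod, Real.Angle.coe_sub]

lemma angleFrom_eq_angleFrom_iff :
    angleFrom b x = angleFrom b y ↔ (arg (x.2 - x.1) : Real.Angle) = arg (y.2 - y.1) := by
  rw [angleFrom, angleFrom, toIcoMod_eq_toIcoMod, Real.Angle.angle_eq_iff_two_pi_dvd_sub]
  constructor
  · rintro ⟨n, hn⟩
    exact ⟨-n, by rw [zsmul_eq_mul] at hn; push_cast; linarith⟩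
  · rintro ⟨n, hn⟩
    exact ⟨-n, by rw [zsmul_eq_mul]; push_cast; linarith⟩

lemma ccw_eq_toIocMod (b : ℂ × ℂ) (hx : x.2 - x.1 ≠ 0) (hy : y.2 - y.1 ≠ 0) :
    ccw x y = toIocMod Real.two_pi_pos 0 (angleFrom b y - angleFrom b x) := by
  have hcoe : ((angleFrom b y - angleFrom b x : ℝ) : Real.Angle) = (ccw x y : Real.Angle) := by
    rw [coe_ccw, coe_ang hx hy, Real.Angle.coe_sub, coe_angleFrom, coe_angleFrom]
    abel
  obtain ⟨n, hn⟩ := Real.Angle.angle_eq_iff_two_pi_dvd_sub.mp hcoe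
  refine ((toIocMod_eq_iff _).mpr ⟨ccw_mem_Ioc x y, n, ?_⟩).symm
  rw [zsmul_eq_mul]
  linarith

lemma ccw_of_angleFrom_lt (b : ℂ × ℂ) (hx : x.2 - x.1 ≠ 0) (hy : y.2 - y.1 ≠ 0)
    (h : angleFrom b x < angleFrom b y) : ccw x y = angleFrom b y - angleFrom b x := by
  rw [ccw_eq_toIocMod b hx hy, toIocMod_eq_self]
  constructor <;> linarith [angleFrom_nonneg b x, angleFrom_lt_two_pi b y]

lemma ccw_of_angleFrom_le (b : ℂ × ℂ) (hx : x.2 - x.1 ≠ 0) (hy : y.2 - y.1 ≠ 0)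
    (h : angleFrom b y ≤ angleFrom b x) :
    ccw x y = angleFrom b y - angleFrom b x + 2 * Real.pi := by
  rw [ccw_eq_toIocMod b hx hy, toIocMod_eq_iff]
  refine ⟨⟨?_, ?_⟩, -1, by simp⟩ <;> linarith [angleFrom_nonneg b y, angleFrom_lt_two_pi b x]

end AngleFrom

lemma exp_mul_I_eq_of_coe_eq {a b : ℝ} (h : (a : Real.Angle) = b) :
    exp (a * I) = exp (b * I) := by
  rw [← Circle.coe_exp, ← Circle.coe_exp, ← Real.Angle.toCircle_coe, h, Real.Angle.toCircle_coe]

lemma exp_neg_arg_mul_I {x y : ℂ × ℂ} (hx : x.2 - x.1 ≠ 0) (hy : y.2 - y.1 ≠ 0) :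
    exp (-(arg (y.2 - y.1) * I)) = exp (-(arg (x.2 - x.1) * I)) * exp (-(ang x y * I)) := by
  rw [← exp_add, ← neg_add, ← add_mul, ← ofReal_add, ← neg_mul, ← neg_mul, ← ofReal_neg,
    ← ofReal_neg]
  refine exp_mul_I_eq_of_coe_eq ?_
  rw [Real.Angle.coe_neg, Real.Angle.coe_neg, Real.Angle.coe_add, coe_ang hx hy]
  abel

lemma cos_half_mul_exp_neg_half (a : ℝ) :
    (Real.cos (a / 2) : ℂ) * exp (-((a / 2 : ℝ) * I)) = (1 + exp (-(a * I))) / 2 := by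
  set u := exp ((a / 2 : ℝ) * I)
  have hu : u ≠ 0 := exp_ne_zero _
  have h1 : exp (-((a / 2 : ℝ) * I)) = u⁻¹ := by rw [exp_neg]
  have h2 : exp (-(a * I)) = (u * u)⁻¹ := by rw [← exp_add, ← exp_neg]; push_cast; ring_nf
  have hc : (Real.cos (a / 2) : ℂ) = (u + u⁻¹) / 2 := by
    rw [ofReal_cos, Complex.cos, neg_mul, h1]
  rw [h1, h2, hc]
  field_simp

lemma transition_term_eq_sub (t w : ℂ) (b b' : ℝ) :
    t * exp (I * ((b + b' - Real.pi : ℝ) : ℂ) / 2) *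
        ((Real.sin ((b' - b) / 2) : ℂ) * ((1 + w * exp (-((b + b' - Real.pi : ℝ) * I))) / 2))
      = t / 4 * (exp (b * I) + w * exp (-(b * I)))
        - t / 4 * (exp (b' * I) + w * exp (-(b' * I))) := by
  have hu : exp ((b / 2 : ℝ) * I) ≠ 0 := exp_ne_zero _
  have hv : exp ((b' / 2 : ℝ) * I) ≠ 0 := exp_ne_zero _
  have hmid : exp (I * ((b + b' - Real.pi : ℝ) : ℂ) / 2)
      = exp ((b / 2 : ℝ) * I) * exp ((b' / 2 : ℝ) * I) * (exp (Real.pi / 2 * I))⁻¹ := by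
    rw [← exp_neg, ← exp_add, ← exp_add]; congr 1; push_cast; ring
  have hsin : (Real.sin ((b' - b) / 2) : ℂ)
      = (exp ((b / 2 : ℝ) * I) / exp ((b' / 2 : ℝ) * I)
        - exp ((b' / 2 : ℝ) * I) / exp ((b / 2 : ℝ) * I)) * I / 2 := by
    rw [ofReal_sin, Complex.sin, ← exp_sub, ← exp_sub]; push_cast; ring_nf
  have hrot : exp (-((b + b' - Real.pi : ℝ) * I)) = (exp ((b / 2 : ℝ) * I) * exp ((b / 2 : ℝ) * I)
      * exp ((b' / 2 : ℝ) * I) * exp ((b' / 2 : ℝ) * I))⁻¹ * exp (Real.pi * I) := by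
    rw [← exp_add, ← exp_add, ← exp_add, ← exp_neg, ← exp_add]; congr 1; push_cast; ring
  have hb : exp (b * I) = exp ((b / 2 : ℝ) * I) * exp ((b / 2 : ℝ) * I) := by
    rw [← exp_add]; push_cast; ring_nf
  have hb' : exp (b' * I) = exp ((b' / 2 : ℝ) * I) * exp ((b' / 2 : ℝ) * I) := by
    rw [← exp_add]; push_cast; ring_nf
  rw [exp_neg (b * I), exp_neg (b' * I), hmid, hsin, hrot, hb, hb', exp_pi_div_two_mul_I,
    exp_pi_mul_I, inv_I]
  field_simp
  ring_nf
  rw [I_sq]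
  ring

lemma sin_half_mul_eq_sub (θ : ℝ) (hθ : Real.cos (θ / 2) ≠ 0) (w : ℂ) :
    (Real.sin (θ / 2) : ℂ) * ((1 + w) / 2)
      = (Real.tan (θ / 2) : ℂ) / 4 * (exp ((θ / 2 : ℝ) * I) + w * exp (-((θ / 2 : ℝ) * I)))
        - (Real.tan (θ / 2) : ℂ) / 4
          * (exp ((Real.pi - θ / 2 : ℝ) * I) + w * exp (-((Real.pi - θ / 2 : ℝ) * I))) := by
  have h1 : exp ((Real.pi - θ / 2 : ℝ) * I) = -exp (-((θ / 2 : ℝ) * I)) := by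
    rw [ofReal_sub, sub_mul, exp_sub, exp_pi_mul_I, exp_neg]; ring
  have h2 : exp (-((Real.pi - θ / 2 : ℝ) * I)) = -exp ((θ / 2 : ℝ) * I) := by
    rw [ofReal_sub, sub_mul, neg_sub, exp_sub, exp_pi_mul_I]; ring
  have hcos : (Real.cos (θ / 2) : ℂ) * 2 = exp ((θ / 2 : ℝ) * I) + exp (-((θ / 2 : ℝ) * I)) := by
    rw [ofReal_cos, Complex.cos, neg_mul]; ring
  have htan : (Real.tan (θ / 2) : ℂ) * Real.cos (θ / 2) = Real.sin (θ / 2) := by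
    rw [Real.tan_eq_sin_div_cos, ofReal_div]
    exact div_mul_cancel₀ _ (ofReal_ne_zero.mpr hθ)
  rw [h1, h2, ← htan]
  linear_combination (Real.tan (θ / 2) : ℂ) * (1 + w) / 4 * hcos

lemma cos_sq_half_arg_neg_add {x : ℂ} (hx : x ≠ 0) :
    Real.cos (arg (-x) / 2) ^ 2 + Real.cos (arg x / 2) ^ 2 = 1 := by
  rw [Real.cos_sq, Real.cos_sq, mul_div_cancel₀ _ two_ne_zero, mul_div_cancel₀ _ two_ne_zero,
    cos_arg (neg_ne_zero.mpr hx), cos_arg hx, neg_re, norm_neg]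
  ring

lemma dirL_eq (e : ℂ × ℂ) : dirL e = exp (-((arg (e.2 - e.1) / 2 : ℝ) * I)) := by
  rw [dirL]
  push_cast
  ring_nf

lemma norm_dirL (e : ℂ × ℂ) : ‖dirL e‖ = 1 := by
  rw [dirL_eq, ← neg_mul, ← ofReal_neg, norm_exp_ofReal_mul_I]

lemma normSq_dirL (e : ℂ × ℂ) : normSq (dirL e) = 1 := by
  rw [normSq_eq_norm_sq, norm_dirL, one_pow]

lemma Finset.exists_bijOn_range_strictMonoOn {α : Type*} [Nonempty α] (s : Finset α)
    (κ : α → ℝ) (hκ : Set.InjOn κ s) :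
    ∃ es : ℕ → α, Set.BijOn es (Finset.range s.card) s ∧
      StrictMonoOn (κ ∘ es) (Finset.range s.card) := by
  have hcard : (s.image κ).card = s.card := Finset.card_image_of_injOn hκ
  set σ := (s.image κ).orderEmbOfFin hcard
  let es : ℕ → α := fun m => Function.invFunOn κ s (if h : m < s.card then σ ⟨m, h⟩ else 0)
  have hes : ∀ m (h : m < s.card), es m ∈ s ∧ κ (es m) = σ ⟨m, h⟩ := fun m h => by
    simp only [es, dif_pos h]
    obtain ⟨a, ha, hae⟩ := Finset.mem_image.mp ((s.image κ).orderEmbOfFin_mem hcard ⟨m, h⟩)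
    exact Function.invFunOn_pos ⟨a, ha, hae⟩
  have hmono : StrictMonoOn (κ ∘ es) (Finset.range s.card) := fun m hm n hn hmn => by
    simp only [Finset.coe_range, Set.mem_Iio] at hm hn
    simp only [Function.comp, (hes m hm).2, (hes n hn).2]
    exact σ.strictMono (Fin.mk_lt_mk.mpr hmn)
  refine ⟨es, ⟨fun m hm => (hes m (by simpa using hm)).1, hmono.injOn.of_comp, ?_⟩, hmono⟩
  intro x hx
  obtain ⟨j, hj⟩ : κ x ∈ Set.range σ := by
    rw [Finset.range_orderEmbOfFin]
    exact Finset.mem_coe.mpr (Finset.mem_image_of_mem κ hx)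
  refine ⟨j, by simp, hκ (hes j j.2).1 hx ?_⟩
  rw [(hes j j.2).2, ← hj]

lemma ue_out (t : Sym2 ℂ) : ue t.out = t := Quot.out_eq t

def edgesOver (S : Finset (Sym2 ℂ)) : Finset (ℂ × ℂ) := S.biUnion fun t => {t.out, rev t.out}

lemma mem_edgesOver {S : Finset (Sym2 ℂ)} {e : ℂ × ℂ} : e ∈ edgesOver S ↔ ue e ∈ S := by
  simp only [edgesOver, Finset.mem_biUnion, Finset.mem_insert, Finset.mem_singleton]
  constructor
  · rintro ⟨t, ht, rfl | rfl⟩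
    · rwa [ue_out]
    · rwa [ue_rev, ue_out]
  · intro he
    exact ⟨ue e, he, eq_or_eq_rev_of_ue_eq (ue_out (ue e)).symm⟩

lemma card_edgesOver_le (S : Finset (Sym2 ℂ)) : (edgesOver S).card ≤ 2 * S.card := by
  refine Finset.card_biUnion_le.trans ?_
  rw [mul_comm, ← smul_eq_mul, ← Finset.sum_const]
  exact Finset.sum_le_sum fun t _ => Finset.card_le_two

lemma mul_sqrt_lt_of_lt_sq {c C r : ℝ} (hc : 0 < c) (hr : r < (c / (|C| + 1)) ^ 2) :
    C * √r < c := by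
  have h : √r < c / (|C| + 1) := (Real.sqrt_lt' (by positivity)).mpr hr
  calc C * √r ≤ |C| * √r := mul_le_mul_of_nonneg_right (le_abs_self C) (Real.sqrt_nonneg _)
    _ ≤ |C| * (c / (|C| + 1)) := mul_le_mul_of_nonneg_left h.le (abs_nonneg _)
    _ < c := by
      rw [mul_div_assoc', div_lt_iff₀ (by positivity)]
      linarith

namespace Isoradial

section

variable (Γ : Isoradial)

def outEdges (z : ℂ) : Finset (ℂ × ℂ) := (Γ.finOut z).toFinset

def inEdges (z : ℂ) : Finset (ℂ × ℂ) := (Γ.outEdges z).image rev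

variable {Γ} {z : ℂ} {e g : ℂ × ℂ}

lemma mem_outEdges : g ∈ Γ.outEdges z ↔ g ∈ Γ.D ∧ g.1 = z := by
  simp [outEdges]

lemma mem_inEdges : g ∈ Γ.inEdges z ↔ g ∈ Γ.D ∧ g.2 = z := by
  simp only [inEdges, Finset.mem_image, mem_outEdges]
  refine ⟨?_, fun ⟨hg, hz⟩ => ⟨rev g, ⟨Γ.symm g hg, hz⟩, rfl⟩⟩
  rintro ⟨a, ⟨ha, rfl⟩, rfl⟩
  exact ⟨Γ.symm a ha, rfl⟩

lemma sub_ne_zero_of_mem (he : e ∈ Γ.D) : e.2 - e.1 ≠ 0 :=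
  sub_ne_zero.mpr (Γ.nd e he).symm

lemma rev_ne_self (he : e ∈ Γ.D) : rev e ≠ e := fun h =>
  Γ.nd e he (congrArg Prod.snd h)

lemma sum_outEdges_eq_sum_inEdges {M : Type*} [AddCommMonoid M] (f : ℂ × ℂ → M) :
    ∑ g ∈ Γ.outEdges z, f g = ∑ g ∈ Γ.inEdges z, f (rev g) := by
  rw [inEdges, Finset.sum_image rev_injective.injOn]
  simp

lemma card_inEdges : (Γ.inEdges z).card = (Γ.outEdges z).card :=
  Finset.card_image_of_injective _ rev_injective

lemma sum_θ_outEdges (he : e ∈ Γ.D) : ∑ g ∈ Γ.outEdges e.1, Γ.θ (ue g) = Real.pi :=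
  Γ.angleSum e.1 ⟨e, he, rfl⟩

lemma sum_θ_inEdges (he : e ∈ Γ.D) : ∑ g ∈ Γ.inEdges e.2, Γ.θ (ue g) = Real.pi := by
  have h := sum_θ_outEdges (Γ.symm e he)
  simp only [sum_outEdges_eq_sum_inEdges, ue_rev] at h
  exact h

lemma two_le_card_outEdges (he : e ∈ Γ.D) : 2 ≤ (Γ.outEdges e.1).card := by
  have hmem : e ∈ Γ.outEdges e.1 := mem_outEdges.mpr ⟨he, rfl⟩
  by_contra! h
  obtain ⟨a, ha⟩ := Finset.card_eq_one.mp (le_antisymm (by omega) (Finset.card_pos.mpr ⟨e, hmem⟩))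
  have hsum := sum_θ_outEdges he
  have hea : e = a := by simpa [ha] using hmem
  rw [ha, Finset.sum_singleton, ← hea] at hsum
  exact (Γ.θlt e he).ne hsum

lemma two_le_card_inEdges (he : e ∈ Γ.D) : 2 ≤ (Γ.inEdges e.2).card := by
  rw [card_inEdges]
  exact two_le_card_outEdges (Γ.symm e he)

lemma consecIn_of_forall_ccw_le {a b : ℂ × ℂ} (ha : a ∈ Γ.inEdges z) (hb : b ∈ Γ.inEdges z)
    (hab : a ≠ b) (h : ∀ g ∈ Γ.inEdges z, g ≠ a → g ≠ b → ccw a b ≤ ccw a g) :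
    ConsecIn Γ.D z a b := by
  obtain ⟨haD, rfl⟩ := mem_inEdges.mp ha
  obtain ⟨hbD, hbz⟩ := mem_inEdges.mp hb
  refine ⟨haD, hbD, rfl, hbz, hab, fun g hg hgz hga hgb => ?_⟩
  rw [ccw_rev_rev, ccw_rev_rev]
  exact h g (mem_inEdges.mpr ⟨hg, hgz⟩) hga hgb

lemma eq_of_coe_arg_eq {p p' : ℂ × ℂ} (hp : p ∈ Γ.inEdges z) (hp' : p' ∈ Γ.inEdges z)
    (h : (arg (p.2 - p.1) : Real.Angle) = arg (p'.2 - p'.1)) : p = p' := by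
  -- Let `q` precede `p`: turning from `q` past `p` to the reversal of a parallel `p'` exceeds `π`.
  by_contra hne
  obtain ⟨pD, -⟩ := mem_inEdges.mp hp
  obtain ⟨p'D, hp'z⟩ := mem_inEdges.mp hp'
  obtain ⟨q, hq, hmax⟩ := ((Γ.inEdges z).erase p).exists_max_image (angleFrom p)
    ⟨p', Finset.mem_erase.mpr ⟨Ne.symm hne, hp'⟩⟩
  obtain ⟨hqp, hq⟩ := Finset.mem_erase.mp hq
  obtain ⟨qD, -⟩ := mem_inEdges.mp hq
  have hcons : ConsecIn Γ.D z q p := consecIn_of_forall_ccw_le hq hp hqp fun g hg hgq hgp => by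
    have hgq := hmax g (Finset.mem_erase.mpr ⟨hgp, hg⟩)
    rw [ccw_of_angleFrom_le p (sub_ne_zero_of_mem qD) (sub_ne_zero_of_mem pD)
        (by simpa using angleFrom_nonneg p q),
      ccw_of_angleFrom_le p (sub_ne_zero_of_mem qD) (sub_ne_zero_of_mem (mem_inEdges.mp hg).1)
        hgq, angleFrom_self]
    linarith [angleFrom_nonneg p g]
  have hpos : 0 < ang q p := by
    rw [Γ.consecAngle z q p hcons]
    linarith [Γ.θpos q qD, Γ.θpos p pD]
  by_cases hqp' : q = p'
  · subst hqp'
    have := (ang_eq_zero_iff (sub_ne_zero_of_mem qD) (sub_ne_zero_of_mem pD)).mpr h.symm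
    linarith
  · have hadd := Γ.angAdd z q p (rev p') hcons (Γ.symm p' p'D) hp'z
      (fun h => hqp' (rev_injective h).symm) (fun h => hne (rev_injective h).symm)
    rw [ang_rev_eq_pi (sub_ne_zero_of_mem pD) (sub_ne_zero_of_mem p'D) h] at hadd
    linarith [ang_le_pi q (rev p')]

lemma injOn_angleFrom (b : ℂ × ℂ) : Set.InjOn (angleFrom b) (Γ.inEdges z) :=
  fun _ hx _ hy h => eq_of_coe_arg_eq hx hy (angleFrom_eq_angleFrom_iff.mp h)

end

section

structure IsCyclicEnum (Γ : Isoradial) (z : ℂ) (es : ℕ → ℂ × ℂ) : Prop where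
  bijOn : Set.BijOn es (Finset.range (Γ.inEdges z).card) (Γ.inEdges z)
  consecIn : ∀ m, m + 1 < (Γ.inEdges z).card → ConsecIn Γ.D z (es m) (es (m + 1))

variable {Γ : Isoradial} {e₀ : ℂ × ℂ}

lemma exists_isCyclicEnum (he₀ : e₀ ∈ Γ.D) :
    ∃ es : ℕ → ℂ × ℂ, es 0 = e₀ ∧ Γ.IsCyclicEnum e₀.2 es := by
  set s := Γ.inEdges e₀.2
  have he₀s : e₀ ∈ s := mem_inEdges.mpr ⟨he₀, rfl⟩
  obtain ⟨es, hbij, hmono⟩ :=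
    s.exists_bijOn_range_strictMonoOn (angleFrom e₀) (injOn_angleFrom e₀)
  have hmem : ∀ m, m < s.card → es m ∈ s := fun m hm => hbij.mapsTo (by simpa using hm)
  have hlt : ∀ {m n}, n < s.card → m < n → angleFrom e₀ (es m) < angleFrom e₀ (es n) :=
    fun hn hmn => hmono (by simpa using hmn.trans hn) (by simpa using hn) hmn
  have hne : ∀ {m}, m < s.card → (es m).2 - (es m).1 ≠ 0 :=
    fun hm => sub_ne_zero_of_mem (mem_inEdges.mp (hmem _ hm)).1
  refine ⟨es, ?_, hbij, fun m (hm : m + 1 < s.card) => consecIn_of_forall_ccw_le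
    (hmem m (by omega)) (hmem _ hm) (fun h => (hlt hm m.lt_succ_self).ne (congrArg _ h))
    fun g hg hgm hgm' => ?_⟩
  · obtain ⟨j, hj, hje⟩ := hbij.surjOn he₀s
    rcases Nat.eq_zero_or_pos j with rfl | hj0
    · exact hje
    · have := hlt (by simpa using hj) hj0
      rw [hje, angleFrom_self] at this
      linarith [angleFrom_nonneg e₀ (es 0)]
  · obtain ⟨j, hj, rfl⟩ := hbij.surjOn hg
    have hj : j < s.card := by simpa using hj
    rw [ccw_of_angleFrom_lt e₀ (hne (by omega)) (hne hm) (hlt hm m.lt_succ_self)]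
    rcases lt_or_gt_of_ne (fun h : j = m => hgm (h ▸ rfl)) with hjm | hjm
    · rw [ccw_of_angleFrom_le e₀ (hne (by omega)) (hne hj) (hlt (by omega) hjm).le]
      linarith [angleFrom_lt_two_pi e₀ (es (m + 1)), angleFrom_nonneg e₀ (es j)]
    · rw [ccw_of_angleFrom_lt e₀ (hne (by omega)) (hne hj) (hlt hj hjm)]
      linarith [hlt hj (Nat.lt_of_le_of_ne hjm fun h => hgm' (by rw [← h]))]

end

section

variable {Γ : Isoradial} {f : Sym2 ℂ → ℂ} {e : ℂ × ℂ} {c : ℝ}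

lemma Sproj_of_real (hc : f (ue e) = c) :
    Sproj Γ f e
      = (Real.sin (Γ.θ (ue e) / 2) * c * Real.cos (arg (e.2 - e.1) / 2) : ℝ) * dirL e := by
  have hre : ((c : ℂ) * (starRingEnd ℂ) (dirL e)).re = c * Real.cos (arg (e.2 - e.1) / 2) := by
    rw [dirL_eq, ← exp_conj, map_neg, map_mul, conj_ofReal, conj_I, mul_neg, neg_neg,
      re_ofReal_mul, exp_ofReal_mul_I_re]
  rw [Sproj, projL, hc, hre, normSq_dirL, div_one]
  push_cast
  ring

lemma normSq_Sproj_of_real (hc : f (ue e) = c) :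
    normSq (Sproj Γ f e)
      = (Real.sin (Γ.θ (ue e) / 2) * c * Real.cos (arg (e.2 - e.1) / 2)) ^ 2 := by
  rw [Sproj_of_real hc, normSq_mul, normSq_dirL, normSq_ofReal]
  ring

lemma Sproj_one :
    Sproj Γ (fun _ => 1) e
      = (Real.sin (Γ.θ (ue e) / 2) : ℂ) * ((1 + exp (-(arg (e.2 - e.1) * I))) / 2) := by
  rw [Sproj_of_real (c := 1) ofReal_one.symm, dirL_eq, ← cos_half_mul_exp_neg_half]
  push_cast
  ring

end

section

variable {Γ : Isoradial} {z : ℂ} {es : ℕ → ℂ × ℂ}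

/-- In the coordinates `B = cumAngle Γ es`, the term of `rev (es (n + 1))` in `T (S 1)` is the
difference of one function at `B (n + 1)` and at `B (n + 2)`, so the transition sum telescopes. -/
def cumAngle (Γ : Isoradial) (es : ℕ → ℂ × ℂ) (m : ℕ) : ℝ :=
  ∑ j ∈ Finset.range m, Γ.θ (ue (es j)) - Γ.θ (ue (es 0)) / 2

lemma cumAngle_succ (m : ℕ) :
    cumAngle Γ es (m + 1) = cumAngle Γ es m + Γ.θ (ue (es m)) := by
  simp only [cumAngle, Finset.sum_range_succ]
  ring

lemma cumAngle_one : cumAngle Γ es 1 = Γ.θ (ue (es 0)) / 2 := by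
  simp only [cumAngle, Finset.sum_range_one]
  ring

namespace IsCyclicEnum

variable (hes : Γ.IsCyclicEnum z es)

include hes

lemma mem_D {m : ℕ} (hm : m < (Γ.inEdges z).card) : es m ∈ Γ.D ∧ (es m).2 = z :=
  mem_inEdges.mp (hes.bijOn.mapsTo (by simpa using hm))

lemma sum_range {M : Type*} [AddCommMonoid M] (f : ℂ × ℂ → M) :
    ∑ m ∈ Finset.range (Γ.inEdges z).card, f (es m) = ∑ g ∈ Γ.inEdges z, f g :=
  Finset.sum_nbij es (fun _ hm => hes.bijOn.mapsTo hm) hes.bijOn.injOn hes.bijOn.surjOn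
    fun _ _ => rfl

lemma cumAngle_card (h0 : es 0 ∈ Γ.D) (hz : (es 0).2 = z) :
    cumAngle Γ es (Γ.inEdges z).card = Real.pi - Γ.θ (ue (es 0)) / 2 := by
  rw [cumAngle, hes.sum_range (fun g => Γ.θ (ue g)), ← hz, sum_θ_inEdges h0]

lemma ang_eq_cumAngle_add {m : ℕ} (hm : m < (Γ.inEdges z).card) {g : ℂ × ℂ} (hg : g ∈ Γ.D)
    (hgz : g.1 = z) (hav : ∀ j ≤ m, g ≠ rev (es j)) :
    ang (es 0) g = cumAngle Γ es m + cumAngle Γ es (m + 1) + ang (es m) g := by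
  induction m with
  | zero =>
    simp only [cumAngle, Finset.sum_range_zero, Finset.sum_range_one, zero_add]
    ring
  | succ n ih =>
    have hcons := hes.consecIn n hm
    have hadd := Γ.angAdd z _ _ g hcons hg hgz (hav n n.le_succ) (hav (n + 1) le_rfl)
    rw [Γ.consecAngle z _ _ hcons] at hadd
    rw [ih (by omega) fun j hj => hav j (by omega)]
    linarith [cumAngle_succ (Γ := Γ) (es := es) n, cumAngle_succ (Γ := Γ) (es := es) (n + 1)]

lemma ang_rev_succ {n : ℕ} (hn : n + 1 < (Γ.inEdges z).card) :
    ang (es 0) (rev (es (n + 1)))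
      = cumAngle Γ es (n + 1) + cumAngle Γ es (n + 2) - Real.pi := by
  obtain ⟨hD, hz⟩ := hes.mem_D hn
  obtain ⟨hD', -⟩ := hes.mem_D (m := n) (by omega)
  have hav : ∀ j ≤ n, rev (es (n + 1)) ≠ rev (es j) := fun j hj h => by
    have := hes.bijOn.injOn (by simpa using hn) (by simp; omega) (rev_injective h)
    omega
  have hcons := hes.consecIn n hn
  have hθ := Γ.consecAngle z _ _ hcons
  rw [hes.ang_eq_cumAngle_add (by omega) (Γ.symm _ hD) hz hav,
    ang_rev_of_pos (sub_ne_zero_of_mem hD') (sub_ne_zero_of_mem hD)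
      (by rw [hθ]; linarith [Γ.θpos _ hD, Γ.θpos _ hD']),
    hθ, cumAngle_succ (n + 1), cumAngle_succ n]
  ring

end IsCyclicEnum

end

section

variable {Γ : Isoradial}

theorem KWop_critX_Sproj_one {e₀ : ℂ × ℂ} (he₀ : e₀ ∈ Γ.D) :
    KWop Γ (critX Γ) (Sproj Γ fun _ => 1) e₀ = 0 := by
  obtain ⟨es, rfl, hes⟩ := exists_isCyclicEnum he₀
  obtain ⟨d, hd⟩ : ∃ d, (Γ.inEdges (es 0).2).card = d + 1 :=
    ⟨_, (Nat.sub_add_cancel (by linarith [two_le_card_inEdges he₀])).symm⟩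
  set t : ℂ := (critX Γ (ue (es 0)) : ℂ)
  set w := exp (-(arg ((es 0).2 - (es 0).1) * I))
  set G : ℕ → ℂ := fun m => t / 4 *
    (exp (cumAngle Γ es (m + 1) * I) + w * exp (-(cumAngle Γ es (m + 1) * I)))
  have hterm : ∀ n ∈ Finset.range d,
      (if rev (es (n + 1)) ≠ rev (es 0) then
        t * exp (I * (ang (es 0) (rev (es (n + 1))) : ℂ) / 2) *
          Sproj Γ (fun _ => 1) (rev (es (n + 1))) else 0) = G n - G (n + 1) := by
    intro n hn
    have hn : n + 1 < (Γ.inEdges (es 0).2).card := by simp at hn; omega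
    obtain ⟨hD, -⟩ := hes.mem_D hn
    have hne : rev (es (n + 1)) ≠ rev (es 0) := fun h =>
      absurd (hes.bijOn.injOn (by simpa using hn) (by simp [hd]) (rev_injective h)) (by omega)
    rw [if_pos hne, Sproj_one, exp_neg_arg_mul_I (sub_ne_zero_of_mem he₀)
        (sub_ne_zero_of_mem (Γ.symm _ hD)), hes.ang_rev_succ hn, ue_rev,
      show Γ.θ (ue (es (n + 1))) = cumAngle Γ es (n + 2) - cumAngle Γ es (n + 1) by
        rw [cumAngle_succ (n + 1)]; ring]
    exact transition_term_eq_sub t w _ _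
  have hcos : Real.cos (Γ.θ (ue (es 0)) / 2) ≠ 0 := (Real.cos_pos_of_mem_Ioo
    ⟨by linarith [Γ.θpos _ he₀, Real.pi_pos], by linarith [Γ.θlt _ he₀]⟩).ne'
  rw [KWop, if_pos he₀, ← outEdges, sum_outEdges_eq_sum_inEdges, ← hes.sum_range, hd,
    Finset.sum_range_succ', if_neg (by simp), add_zero, Finset.sum_congr rfl hterm,
    Finset.sum_range_sub']
  simp only [G, zero_add, cumAngle_one, ← hd, hes.cumAngle_card he₀ rfl, Sproj_one]
  rw [sin_half_mul_eq_sub _ hcos w]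
  exact sub_self _

end

section

variable {Γ : Isoradial} {x : Sym2 ℂ → ℝ} {φ : ℂ × ℂ → ℂ} {f : Sym2 ℂ → ℂ} {e : ℂ × ℂ}

lemma KWop_sub (φ ψ : ℂ × ℂ → ℂ) (e : ℂ × ℂ) :
    KWop Γ x (φ - ψ) e = KWop Γ x φ e - KWop Γ x ψ e := by
  unfold KWop
  split_ifs
  · rw [Pi.sub_apply, sub_sub_sub_comm, ← Finset.sum_sub_distrib]
    congr 1
    exact Finset.sum_congr rfl fun g _ => by split_ifs <;> simp [mul_sub]
  · simp

lemma Sproj_sub (f g : Sym2 ℂ → ℂ) : Sproj Γ (f - g) = Sproj Γ f - Sproj Γ g := by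
  ext e
  simp only [Sproj, projL, Pi.sub_apply, sub_mul, sub_re]
  push_cast
  ring

lemma Sproj_eq_zero (h : f (ue e) = 0) : Sproj Γ f e = 0 := by
  simp [Sproj, projL, h]

lemma KWop_eq_zero (he : e ∈ Γ.D) (hφe : φ e = 0) (hφ : ∀ g ∈ Γ.outEdges e.2, φ g = 0) :
    KWop Γ x φ e = 0 := by
  rw [KWop, if_pos he, hφe, zero_sub, neg_eq_zero]
  exact Finset.sum_eq_zero fun g hg => by simp [hφ g hg]

lemma norm_KWop_le (he : e ∈ Γ.D) (hφe : φ e = 0) :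
    ‖KWop Γ x φ e‖ ≤ |x (ue e)| * ∑ g ∈ (Γ.outEdges e.2).erase (rev e), ‖φ g‖ := by
  rw [KWop, if_pos he, hφe, zero_sub, norm_neg, ← outEdges, ← Finset.sum_filter,
    Finset.filter_ne', Finset.mul_sum]
  refine (norm_sum_le _ _).trans (Finset.sum_le_sum fun g _ => ?_)
  rw [norm_mul, norm_mul, norm_real, Real.norm_eq_abs, norm_exp]
  simp

lemma norm_Sproj_le {c : ℝ} (he : e ∈ Γ.D) (hc : f (ue e) = c) (hc1 : |c| ≤ 1) :
    ‖Sproj Γ f e‖ ≤ Real.sin (Γ.θ (ue e) / 2) := by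
  have hsin : 0 ≤ Real.sin (Γ.θ (ue e) / 2) := Real.sin_nonneg_of_nonneg_of_le_pi
    (by linarith [Γ.θpos e he]) (by linarith [Γ.θlt e he, Real.pi_pos])
  rw [Sproj_of_real hc, norm_mul, norm_dirL, mul_one, norm_real, Real.norm_eq_abs, abs_mul,
    abs_mul, abs_of_nonneg hsin]
  calc Real.sin (Γ.θ (ue e) / 2) * |c| * |Real.cos (arg (e.2 - e.1) / 2)|
      ≤ Real.sin (Γ.θ (ue e) / 2) * 1 * 1 := by
        gcongr
        exact Real.abs_cos_le_one _
    _ = _ := by ring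

end

section

variable {Γ : Isoradial} {H : Finset (Sym2 ℂ)} {e : ℂ × ℂ} {z : ℂ}

lemma exists_indH_sub_indH (s t : Sym2 ℂ) : ∃ c : ℝ, indH H s - indH H t = c ∧ |c| ≤ 1 := by
  unfold indH
  split_ifs
  exacts [⟨0, by simp⟩, ⟨1, by simp⟩, ⟨-1, by simp⟩, ⟨0, by simp⟩]

lemma indH_ue_eq_of_not_bdryVtx {g : ℂ × ℂ} (hb : ¬ BdryVtx Γ H z) (he : e ∈ Γ.D)
    (hez : e.2 = z) (hg : g ∈ Γ.D) (hgz : g.2 = z) : indH H (ue g) = indH H (ue e) := by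
  unfold BdryVtx at hb
  push Not at hb
  unfold indH
  by_cases hgH : ue g ∈ H <;> by_cases heH : ue e ∈ H
  · simp [hgH, heH]
  · exact absurd (hb ⟨g, hg, hgz, hgH⟩ e he hez) heH
  · exact absurd (hb ⟨e, he, hez, heH⟩ g hg hgz) hgH
  · simp [hgH, heH]

lemma KWop_Sproj_indH_eq (he : e ∈ Γ.D) :
    KWop Γ (critX Γ) (Sproj Γ (indH H)) e
      = KWop Γ (critX Γ) (Sproj Γ (indH H - fun _ => indH H (ue e))) e := by
  by_cases h : ue e ∈ H
  · rw [show indH H (ue e) = 1 from if_pos h, Sproj_sub, KWop_sub, KWop_critX_Sproj_one he,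
      sub_zero]
  · rw [show indH H (ue e) = 0 from if_neg h]
    congr
    ext
    simp

lemma KWop_Sproj_indH_eq_zero (he : e ∈ Γ.D) (hb : ¬ BdryVtx Γ H e.2) :
    KWop Γ (critX Γ) (Sproj Γ (indH H)) e = 0 := by
  rw [KWop_Sproj_indH_eq he]
  refine KWop_eq_zero he (Sproj_eq_zero (sub_self _)) fun g hg => Sproj_eq_zero ?_
  obtain ⟨hgD, hgz⟩ := mem_outEdges.mp hg
  rw [Pi.sub_apply, ← ue_rev g, indH_ue_eq_of_not_bdryVtx hb he rfl (Γ.symm g hgD) hgz, sub_self]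

lemma abs_critX_le {K : ℝ} (hK : K < Real.pi) (hθK : Γ.θ (ue e) ≤ K) (he : e ∈ Γ.D) :
    |critX Γ (ue e)| ≤ Real.tan (K / 2) := by
  have hθ := Γ.θpos e he
  rw [critX, abs_of_pos (Real.tan_pos_of_pos_of_lt_pi_div_two (by linarith) (by linarith))]
  exact Real.strictMonoOn_tan.monotoneOn ⟨by linarith [Real.pi_pos], by linarith⟩
    ⟨by linarith [Real.pi_pos], by linarith⟩ (by linarith)

lemma norm_KWop_Sproj_indH_le {K : ℝ} (hK : K < Real.pi) (hθK : Γ.θ (ue e) ≤ K)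
    (he : e ∈ Γ.D) :
    ‖KWop Γ (critX Γ) (Sproj Γ (indH H)) e‖
      ≤ Real.tan (K / 2) * ∑ g ∈ (Γ.outEdges e.2).erase (rev e), Real.sin (Γ.θ (ue g) / 2) := by
  rw [KWop_Sproj_indH_eq he]
  refine (norm_KWop_le he (Sproj_eq_zero (sub_self _))).trans
    (mul_le_mul (abs_critX_le hK hθK he) (Finset.sum_le_sum fun g hg => ?_)
      (Finset.sum_nonneg fun _ _ => norm_nonneg _) ((abs_nonneg _).trans (abs_critX_le hK hθK he)))
  obtain ⟨c, hc, hc1⟩ := exists_indH_sub_indH (H := H) (ue g) (ue e)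
  exact norm_Sproj_le (mem_outEdges.mp (Finset.mem_of_mem_erase hg)).1 hc hc1

lemma sq_sum_sin_half_le {Δ : ℝ} (he : e ∈ Γ.D) (hΔ : ((Γ.outEdges e.2).card : ℝ) ≤ Δ) :
    (∑ g ∈ (Γ.outEdges e.2).erase (rev e), Real.sin (Γ.θ (ue g) / 2)) ^ 2 ≤ Δ ^ 2 / 2 := by
  set s := (Γ.outEdges e.2).erase (rev e)
  have hrev : rev e ∈ Γ.outEdges e.2 := mem_outEdges.mpr ⟨Γ.symm e he, rfl⟩
  have hcard : (s.card : ℝ) + 1 = (Γ.outEdges e.2).card := by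
    rw [Finset.card_erase_of_mem hrev, Nat.cast_sub (Finset.card_pos.mpr ⟨_, hrev⟩)]
    ring
  have hcard2 : (2 : ℝ) ≤ (Γ.outEdges e.2).card := by
    exact_mod_cast two_le_card_outEdges (Γ.symm e he)
  have hθ : ∀ g ∈ s, 0 < Γ.θ (ue g) :=
    fun g hg => Γ.θpos g (mem_outEdges.mp (Finset.mem_of_mem_erase hg)).1
  have hnonneg : 0 ≤ ∑ g ∈ s, Real.sin (Γ.θ (ue g) / 2) := Finset.sum_nonneg fun g hg =>
    Real.sin_nonneg_of_nonneg_of_le_pi (by linarith [hθ g hg])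
      (by linarith [Γ.θlt g (mem_outEdges.mp (Finset.mem_of_mem_erase hg)).1, Real.pi_pos])
  have hle_card : ∑ g ∈ s, Real.sin (Γ.θ (ue g) / 2) ≤ s.card := by
    simpa using Finset.sum_le_card_nsmul s _ 1 fun g _ => Real.sin_le_one _
  have hle_pi : ∑ g ∈ s, Real.sin (Γ.θ (ue g) / 2) ≤ Real.pi / 2 := calc
    _ ≤ ∑ g ∈ s, Γ.θ (ue g) / 2 := Finset.sum_le_sum fun g hg => Real.sin_le (by linarith [hθ g hg])
    _ ≤ ∑ g ∈ Γ.outEdges e.2, Γ.θ (ue g) / 2 :=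
      Finset.sum_le_sum_of_subset_of_nonneg (Finset.erase_subset _ _) fun g hg _ =>
        by linarith [Γ.θpos g (mem_outEdges.mp hg).1]
    _ = Real.pi / 2 := by
      rw [← Finset.sum_div]
      exact congrArg (· / 2) (sum_θ_outEdges (Γ.symm e he))
  -- a vertex of degree two contributes a single sine; otherwise `Δ ≥ 3 > π / √2`
  rcases eq_or_lt_of_le hcard2 with h2 | h3
  · nlinarith
  · have h3 : (3 : ℝ) ≤ (Γ.outEdges e.2).card := by
      exact_mod_cast (show 2 < (Γ.outEdges e.2).card by exact_mod_cast h3)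
    nlinarith [Real.pi_lt_d2]

end

section

variable {Γ : Isoradial} {H : Finset (Sym2 ℂ)} {φ : ℂ × ℂ → ℂ}

lemma l2sq_eq_sum {F : Finset (ℂ × ℂ)} (hF : ∀ e ∈ F, e ∈ Γ.D)
    (hφ : ∀ e ∈ Γ.D, e ∉ F → φ e = 0) : l2sq Γ φ = ∑ e ∈ F, normSq (φ e) := by
  rw [l2sq, tsum_subtype Γ.D fun e => normSq (φ e), tsum_eq_sum (s := F) fun e he => ?_]
  · exact Finset.sum_congr rfl fun e heF => Set.indicator_of_mem (hF e heF) _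
  · by_cases hD : e ∈ Γ.D
    · simp [Set.indicator_of_mem hD, hφ e hD he]
    · exact Set.indicator_of_notMem hD _

lemma bdryEdges_finite (H : Finset (Sym2 ℂ)) : (bdryEdges Γ H).Finite := by
  set V := (edgesOver H).image Prod.snd
  have hV : ∀ z, BdryVtx Γ H z → z ∈ V := fun z ⟨⟨e, _, hez, heH⟩, _⟩ =>
    Finset.mem_image.mpr ⟨e, mem_edgesOver.mpr heH, hez⟩
  refine (((V.biUnion fun z => Γ.outEdges z ∪ Γ.inEdges z).image ue).finite_toSet).subset ?_
  rintro t ⟨e, he, rfl, hb | hb⟩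
  · exact Finset.mem_image_of_mem ue (Finset.mem_biUnion.mpr
      ⟨e.1, hV _ hb, Finset.mem_union_left _ (mem_outEdges.mpr ⟨he, rfl⟩)⟩)
  · exact Finset.mem_image_of_mem ue (Finset.mem_biUnion.mpr
      ⟨e.2, hV _ hb, Finset.mem_union_right _ (mem_inEdges.mpr ⟨he, rfl⟩)⟩)

lemma l2sq_KWop_Sproj_indH_le {K Δ : ℝ} (hK : K < Real.pi)
    (hθK : ∀ e ∈ Γ.D, Γ.θ (ue e) ≤ K) (hΔ : ∀ z : ℂ, ((Γ.outEdges z).card : ℝ) ≤ Δ) :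
    l2sq Γ (KWop Γ (critX Γ) (Sproj Γ (indH H)))
      ≤ Real.tan (K / 2) ^ 2 * Δ ^ 2 * (bdryEdges Γ H).ncard := by
  set F := (edgesOver (bdryEdges_finite (Γ := Γ) H).toFinset).filter (· ∈ Γ.D)
  have hF : ∀ e ∈ Γ.D, e ∉ F → KWop Γ (critX Γ) (Sproj Γ (indH H)) e = 0 :=
    fun e he heF => KWop_Sproj_indH_eq_zero he fun hb => heF (Finset.mem_filter.mpr
      ⟨mem_edgesOver.mpr ((Set.Finite.mem_toFinset _).mpr ⟨e, he, rfl, Or.inr hb⟩), he⟩)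
  have hterm : ∀ e ∈ F, normSq (KWop Γ (critX Γ) (Sproj Γ (indH H)) e)
      ≤ Real.tan (K / 2) ^ 2 * Δ ^ 2 / 2 := fun e heF => by
    have he := (Finset.mem_filter.mp heF).2
    have htan : 0 ≤ Real.tan (K / 2) := (abs_nonneg _).trans (abs_critX_le hK (hθK e he) he)
    rw [normSq_eq_norm_sq]
    calc _ ≤ (Real.tan (K / 2) * ∑ g ∈ (Γ.outEdges e.2).erase (rev e),
          Real.sin (Γ.θ (ue g) / 2)) ^ 2 :=
          pow_le_pow_left₀ (norm_nonneg _) (norm_KWop_Sproj_indH_le hK (hθK e he) he) 2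
      _ ≤ _ := by
        rw [mul_pow, mul_div_assoc]
        exact mul_le_mul_of_nonneg_left (sq_sum_sin_half_le he (hΔ e.2)) (sq_nonneg _)
  have hcard : (F.card : ℝ) ≤ 2 * (bdryEdges Γ H).ncard := by
    rw [Set.ncard_eq_toFinset_card _ (bdryEdges_finite H)]
    exact_mod_cast (Finset.card_filter_le _ _).trans (card_edgesOver_le _)
  rw [l2sq_eq_sum (fun e he => (Finset.mem_filter.mp he).2) hF]
  calc _ ≤ F.card • (Real.tan (K / 2) ^ 2 * Δ ^ 2 / 2) := Finset.sum_le_card_nsmul _ _ _ hterm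
    _ ≤ (2 * (bdryEdges Γ H).ncard) * (Real.tan (K / 2) ^ 2 * Δ ^ 2 / 2) := by
      rw [nsmul_eq_mul]
      exact mul_le_mul_of_nonneg_right hcard (by positivity)
    _ = _ := by ring

/-- The two orientations of an edge carry projections onto orthogonal lines. -/
lemma normSq_Sproj_add_rev {f : Sym2 ℂ → ℂ} {e : ℂ × ℂ} {c : ℝ} (he : e ∈ Γ.D)
    (hc : f (ue e) = c) :
    normSq (Sproj Γ f e) + normSq (Sproj Γ f (rev e)) = (Real.sin (Γ.θ (ue e) / 2) * c) ^ 2 := by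
  rw [normSq_Sproj_of_real hc, normSq_Sproj_of_real (by rwa [ue_rev]), ue_rev, rev_sub,
    ← mul_one ((Real.sin (Γ.θ (ue e) / 2) * c) ^ 2),
    ← cos_sq_half_arg_neg_add (sub_ne_zero_of_mem he)]
  ring

lemma l2sq_Sproj_indH_ge {k : ℝ} (hk : 0 < k) (hθk : ∀ e ∈ Γ.D, k ≤ Γ.θ (ue e))
    (hH : ∀ t ∈ H, ∃ e ∈ Γ.D, ue e = t) :
    Real.sin (k / 2) ^ 2 * H.card ≤ l2sq Γ (Sproj Γ (indH H)) := by
  set F := (edgesOver H).filter (· ∈ Γ.D)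
  have hF : ∀ e ∈ Γ.D, e ∉ F → Sproj Γ (indH H) e = 0 := fun e he heF =>
    Sproj_eq_zero (if_neg fun h => heF (Finset.mem_filter.mpr ⟨mem_edgesOver.mpr h, he⟩))
  rw [l2sq_eq_sum (fun e he => (Finset.mem_filter.mp he).2) hF,
    ← Finset.sum_fiberwise_of_maps_to (g := ue) (t := H)
      fun e he => mem_edgesOver.mp (Finset.mem_filter.mp he).1, mul_comm, ← nsmul_eq_mul]
  refine Finset.card_nsmul_le_sum _ _ _ fun t ht => ?_
  obtain ⟨p, hp, rfl⟩ := hH t ht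
  have hpF : ∀ q ∈ Γ.D, ue q = ue p → q ∈ F.filter (ue · = ue p) := fun q hq hqp =>
    Finset.mem_filter.mpr ⟨Finset.mem_filter.mpr ⟨mem_edgesOver.mpr (hqp ▸ ht), hq⟩, hqp⟩
  have hpair : normSq (Sproj Γ (indH H) p) + normSq (Sproj Γ (indH H) (rev p))
      = Real.sin (Γ.θ (ue p) / 2) ^ 2 := by
    rw [normSq_Sproj_add_rev hp (c := 1) (by simp [indH, ht]), mul_one]
  calc Real.sin (k / 2) ^ 2 ≤ Real.sin (Γ.θ (ue p) / 2) ^ 2 := by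
        have hθ := hθk p hp
        have hlt := Γ.θlt p hp
        gcongr
        · exact Real.sin_nonneg_of_nonneg_of_le_pi (by linarith) (by linarith)
        · exact Real.sin_le_sin_of_le_of_le_pi_div_two (by linarith) (by linarith) (by linarith)
    _ = ∑ q ∈ {p, rev p}, normSq (Sproj Γ (indH H) q) := by
        rw [Finset.sum_pair (rev_ne_self hp).symm, hpair]
    _ ≤ _ := Finset.sum_le_sum_of_subset_of_nonneg
        (Finset.insert_subset (hpF p hp rfl) (Finset.singleton_subset_iff.mpr
          (hpF _ (Γ.symm p hp) (ue_rev p))))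
        fun _ _ _ => normSq_nonneg _

end

section

variable {Γ : Isoradial} {H : Finset (Sym2 ℂ)} {k K Δ : ℝ}

lemma sin_half_pos {e : ℂ × ℂ} (hk : 0 < k) (he : e ∈ Γ.D) (hθk : k ≤ Γ.θ (ue e)) :
    0 < Real.sin (k / 2) :=
  Real.sin_pos_of_pos_of_lt_pi (by linarith) (by linarith [Γ.θlt e he, Real.pi_pos])

lemma sqrt_l2sq_KWop_Sproj_indH_le (hk : 0 < k) (hK : K < Real.pi)
    (hθ : ∀ e ∈ Γ.D, k ≤ Γ.θ (ue e) ∧ Γ.θ (ue e) ≤ K)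
    (hΔ : ∀ z : ℂ, ((Γ.outEdges z).card : ℝ) ≤ Δ)
    (hH : ∀ t ∈ H, ∃ e ∈ Γ.D, ue e = t) (hne : H.Nonempty) :
    √(l2sq Γ (KWop Γ (critX Γ) (Sproj Γ (indH H))))
      ≤ Real.tan (K / 2) * Δ / Real.sin (k / 2) * √((bdryEdges Γ H).ncard / H.card)
        * √(l2sq Γ (Sproj Γ (indH H))) := by
  obtain ⟨e, he, -⟩ := hH _ hne.choose_spec
  have hsin := sin_half_pos hk he (hθ e he).1
  have htan : 0 ≤ Real.tan (K / 2) := (abs_nonneg _).trans (abs_critX_le hK (hθ e he).2 he)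
  have hΔ0 : 0 ≤ Δ := (Nat.cast_nonneg _).trans (hΔ 0)
  have hH0 : (0 : ℝ) < H.card := by exact_mod_cast hne.card_pos
  calc √(l2sq Γ (KWop Γ (critX Γ) (Sproj Γ (indH H))))
      ≤ √((Real.tan (K / 2) * Δ) ^ 2 * (bdryEdges Γ H).ncard) := Real.sqrt_le_sqrt
        ((l2sq_KWop_Sproj_indH_le hK (fun e he => (hθ e he).2) hΔ).trans_eq (by ring))
    _ = Real.tan (K / 2) * Δ / Real.sin (k / 2) * √((bdryEdges Γ H).ncard / H.card)
        * √(Real.sin (k / 2) ^ 2 * H.card) := by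
      rw [Real.sqrt_mul (by positivity), Real.sqrt_sq (by positivity),
        Real.sqrt_mul (by positivity), Real.sqrt_sq hsin.le, Real.sqrt_div' _ hH0.le]
      field_simp
    _ ≤ _ := by
      gcongr
      exact l2sq_Sproj_indH_ge hk (fun e he => (hθ e he).1) hH

end

end Isoradial

/-- on the full isoradial graph with angle bounds `k ≤ θ_e ≤ K` and maximal
degree `Δ`, for every finite subgraph `H` one has
`‖T(S 1_H)‖ ≤ C √(|H₀|/|H|) ‖S 1_H‖` with `C = tan(K/2)·Δ/sin(k/2)`; consequently, if
there are finite subgraphs with `|H₀|/|H|` arbitrarily small, the critical Kac-Ward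
operator admits no bounded inverse on `ℓ²`. -/
theorem critical_KW_no_bounded_inverse
    (Γ : Isoradial) (k K Δ : ℝ) (hk : 0 < k) (hK : K < Real.pi)
    (hθ : ∀ e ∈ Γ.D, k ≤ Γ.θ (ue e) ∧ Γ.θ (ue e) ≤ K)
    (hΔ : ∀ z : ℂ, ((Γ.finOut z).toFinset.card : ℝ) ≤ Δ) :
    (∀ H : Finset (Sym2 ℂ), (∀ t ∈ H, ∃ e ∈ Γ.D, ue e = t) → H.Nonempty →
      Real.sqrt (l2sq Γ (KWop Γ (critX Γ) (Sproj Γ (indH H)))) ≤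
        (Real.tan (K / 2) * Δ / Real.sin (k / 2)) *
          Real.sqrt (((bdryEdges Γ H).ncard : ℝ) / (H.card : ℝ)) *
          Real.sqrt (l2sq Γ (Sproj Γ (indH H)))) ∧
    ((∀ δ > (0 : ℝ), ∃ H : Finset (Sym2 ℂ), (∀ t ∈ H, ∃ e ∈ Γ.D, ue e = t) ∧
        0 < H.card ∧ ((bdryEdges Γ H).ncard : ℝ) < δ * (H.card : ℝ)) →
      ¬ ∃ c > (0 : ℝ), ∀ φ : (ℂ × ℂ) → ℂ,
        c * Real.sqrt (l2sq Γ φ) ≤ Real.sqrt (l2sq Γ (KWop Γ (critX Γ) φ))) := by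
  have hbound := fun H (hH : ∀ t ∈ H, ∃ e ∈ Γ.D, ue e = t) (hne : H.Nonempty) =>
    Isoradial.sqrt_l2sq_KWop_Sproj_indH_le hk hK hθ hΔ hH hne
  refine ⟨hbound, fun hsmall ⟨c, hc, hlow⟩ => ?_⟩
  set C := Real.tan (K / 2) * Δ / Real.sin (k / 2)
  obtain ⟨H, hH, hcard, hlt⟩ := hsmall ((c / (|C| + 1)) ^ 2) (by positivity)
  obtain ⟨e, he, -⟩ := hH _ (Finset.card_pos.mp hcard).choose_spec
  have hφ : 0 < √(l2sq Γ (Sproj Γ (indH H))) := Real.sqrt_pos.mpr <| lt_of_lt_of_le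
    (by have := Isoradial.sin_half_pos hk he (hθ e he).1; positivity)
    (Isoradial.l2sq_Sproj_indH_ge hk (fun e he => (hθ e he).1) hH)
  have hr := mul_sqrt_lt_of_lt_sq (C := C) hc ((div_lt_iff₀ (by exact_mod_cast hcard)).mpr hlt)
  exact (mul_lt_mul_of_pos_right hr hφ).not_ge
    ((hlow _).trans (hbound H hH (Finset.card_pos.mp hcard)))
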